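/- arXiv:2403.03151 — 2 statements merged into one kernel-verified Lean document; each statement's English description precedes it below -/
import Mathlib

section
/- Let $m$ be a positive integer and $i, j < m$. Let $I$ be a fixed subset of $\{1,\dots,m\}$ of size $i$, and let $J$ be a uniformly random subset of $\{1,\dots,m\}$ of size $j$. Then $|I \cap J|$ is stochastically dominated by a binomial random variable with parameters $i$ and $\min(j/(m-i), 1)$. -/
/-!
Write `n = m - i` for the size of the complement of `I`. Counting `J` by `k = |I ∩ J|` gives
hypergeometric weights `C(i,k) C(n,j-k)`, with total `C(m,j)`; for `j ≤ n` the binomial law with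
`p = j/n` has weights `C(i,k) j^k (n-j)^(i-k)`, with total `n^i`. The ratio of the first to the
second is nonincreasing in `k`, because `C(n,r) (n-j) ≤ C(n,r+1) j` for `r < j`. A nonincreasing
likelihood ratio gives domination of the tails, by comparing every term below the threshold `t`
with every term above it. When `j ≥ n` the parameter is truncated to `1` and the binomial law
is concentrated at `i`, an upper bound for `|I ∩ J|`.
-/

open scoped ENNReal Classical
open scoped NNReal
open Finset

set_option linter.deprecated false

def hypergeomWeight (i n j k : ℕ) : ℕ := if k ≤ j then i.choose k * n.choose (j - k) else 0

def binomialWeight (i a b k : ℕ) : ℕ := i.choose k * a ^ k * b ^ (i - k)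

theorem inter_union_eq_and_union_sdiff_eq {α : Type*} [Fintype α] [DecidableEq α]
    {I A B : Finset α} (hA : A ⊆ I) (hB : B ⊆ Iᶜ) :
    I ∩ (A ∪ B) = A ∧ (A ∪ B) \ I = B := by
  rw [subset_iff] at hA; rw [subset_iff] at hB
  constructor <;> ext x <;> simp only [mem_inter, mem_union, mem_sdiff] <;> grind [mem_compl]

theorem card_filter_card_inter_eq_hypergeomWeight {α : Type*} [Fintype α] [DecidableEq α]
    (I : Finset α) (j k : ℕ) :
    #{J ∈ powersetCard j univ | #(I ∩ J) = k} = hypergeomWeight #I #Iᶜ j k := by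
  unfold hypergeomWeight
  split_ifs with hkj
  · rw [← card_powersetCard, ← card_powersetCard, ← card_product]
    apply card_nbij' (fun J => (I ∩ J, J \ I)) (fun P => P.1 ∪ P.2)
    · intro J hJ
      simp only [mem_coe, mem_filter, mem_powersetCard, mem_product] at hJ ⊢
      refine ⟨⟨inter_subset_left, hJ.2⟩, ?_, ?_⟩
      · simp [subset_iff]
      · rw [card_sdiff, hJ.1.2, hJ.2]
    · intro P hP
      simp only [mem_coe, mem_filter, mem_powersetCard, mem_product] at hP ⊢
      have hdisj : Disjoint P.1 P.2 :=
        disjoint_of_subset_left hP.1.1 (subset_compl_iff_disjoint_left.mp hP.2.1)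
      rw [card_union_of_disjoint hdisj, (inter_union_eq_and_union_sdiff_eq hP.1.1 hP.2.1).1]
      exact ⟨⟨subset_univ _, by omega⟩, hP.1.2⟩
    · intro J _
      simp only [inter_comm I]
      rw [union_comm, sdiff_union_inter]
    · intro P hP
      simp only [mem_coe, mem_powersetCard, mem_product] at hP
      obtain ⟨h1, h2⟩ := inter_union_eq_and_union_sdiff_eq hP.1.1 hP.2.1
      exact Prod.ext h1 h2
  · simp only [card_eq_zero, filter_eq_empty_iff, mem_powersetCard]
    rintro J ⟨-, rfl⟩ rfl
    exact hkj (card_le_card inter_subset_right)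

theorem card_filter_le_card_inter_eq_sum {α : Type*} [Fintype α] [DecidableEq α]
    (I : Finset α) (j t : ℕ) :
    #{J ∈ powersetCard j univ | t ≤ #(I ∩ J)} =
      ∑ k ∈ Ico t (#I + 1), hypergeomWeight #I #Iᶜ j k := by
  rw [card_eq_sum_card_fiberwise (f := fun J => #(I ∩ J)) (t := Ico t (#I + 1))]
  · refine sum_congr rfl fun k hk => ?_
    rw [filter_filter, ← card_filter_card_inter_eq_hypergeomWeight]
    congr 1
    refine filter_congr fun J _ => ?_
    grind
  · intro J hJ
    simp only [coe_filter, mem_coe, mem_Ico] at hJ ⊢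
    exact ⟨hJ.2, Nat.lt_succ_of_le (card_le_card inter_subset_left)⟩

theorem card_powersetCard_eq_sum_hypergeomWeight {α : Type*} [Fintype α] [DecidableEq α]
    (I : Finset α) (j : ℕ) :
    #(powersetCard j (univ : Finset α)) =
      ∑ k ∈ range (#I + 1), hypergeomWeight #I #Iᶜ j k := by
  rw [range_eq_Ico, ← card_filter_le_card_inter_eq_sum,
    filter_true_of_mem fun _ _ => Nat.zero_le _]

theorem sum_binomialWeight (i a b : ℕ) :
    ∑ k ∈ range (i + 1), binomialWeight i a b k = (a + b) ^ i := by
  rw [add_pow]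
  exact sum_congr rfl fun k _ => by rw [binomialWeight, Nat.cast_id]; ring

theorem Nat.choose_mul_le_choose_succ_mul {n r j q : ℕ} (hrj : r < j) (hjq : j + q = n) :
    n.choose r * q ≤ n.choose (r + 1) * j :=
  calc n.choose r * q ≤ n.choose r * (n - r) := Nat.mul_le_mul_left _ (by omega)
    _ = n.choose (r + 1) * (r + 1) := (Nat.choose_succ_right_eq n r).symm
    _ ≤ n.choose (r + 1) * j := Nat.mul_le_mul_left _ hrj

theorem Nat.choose_mul_pow_le_choose_add_mul_pow {n r d j q : ℕ} (hrd : r + d ≤ j)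
    (hjq : j + q = n) : n.choose r * q ^ d ≤ n.choose (r + d) * j ^ d := by
  induction d with
  | zero => simp
  | succ d ih =>
    calc n.choose r * q ^ (d + 1) = n.choose r * q ^ d * q := by ring
      _ ≤ n.choose (r + d) * j ^ d * q := Nat.mul_le_mul_right _ (ih (by omega))
      _ = n.choose (r + d) * q * j ^ d := by ring
      _ ≤ n.choose (r + (d + 1)) * j * j ^ d :=
        Nat.mul_le_mul_right _ (Nat.choose_mul_le_choose_succ_mul (by omega) hjq)
      _ = n.choose (r + (d + 1)) * j ^ (d + 1) := by ring

theorem hypergeomWeight_mul_binomialWeight_le {i j q n k l : ℕ} (hjq : j + q = n)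
    (hkl : k ≤ l) :
    hypergeomWeight i n j l * binomialWeight i j q k ≤
      hypergeomWeight i n j k * binomialWeight i j q l := by
  unfold hypergeomWeight binomialWeight
  rcases lt_or_ge i l with hil | hli
  · simp [Nat.choose_eq_zero_of_lt hil]
  split_ifs with hlj hkj
  · obtain ⟨d, rfl⟩ := Nat.exists_eq_add_of_le hkl
    rw [show i - k = i - (k + d) + d by omega, show j - k = j - (k + d) + d by omega]
    have hrd : j - (k + d) + d ≤ j := by omega
    generalize i - (k + d) = e, j - (k + d) = r at hrd ⊢
    calc i.choose (k + d) * n.choose r * (i.choose k * j ^ k * q ^ (e + d))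
        = n.choose r * q ^ d * (i.choose (k + d) * i.choose k * j ^ k * q ^ e) := by ring
      _ ≤ n.choose (r + d) * j ^ d * (i.choose (k + d) * i.choose k * j ^ k * q ^ e) :=
        Nat.mul_le_mul_right _ (Nat.choose_mul_pow_le_choose_add_mul_pow hrd hjq)
      _ = i.choose k * n.choose (r + d) * (i.choose (k + d) * j ^ (k + d) * q ^ e) := by ring
  · omega
  all_goals simp

theorem sum_Ico_mul_sum_range_le_of_ratio_antitone {R : Type*} [Semiring R] [PartialOrder R]
    [IsOrderedAddMonoid R] {a b : ℕ → R} {N : ℕ}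
    (hab : ∀ k l, k ≤ l → l < N → a l * b k ≤ a k * b l) (t : ℕ) :
    (∑ k ∈ Ico t N, a k) * ∑ k ∈ range N, b k ≤
      (∑ k ∈ range N, a k) * ∑ k ∈ Ico t N, b k := by
  rcases le_or_gt N t with hNt | htN
  · simp [Ico_eq_empty_of_le hNt]
  have cross : (∑ k ∈ Ico t N, a k) * ∑ k ∈ range t, b k ≤
      (∑ k ∈ range t, a k) * ∑ k ∈ Ico t N, b k := by
    rw [sum_mul_sum, sum_mul_sum, sum_comm (s := range t)]
    refine sum_le_sum fun l hl => sum_le_sum fun k hk => ?_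
    rw [mem_Ico] at hl; rw [mem_range] at hk
    exact hab k l (by omega) hl.2
  rw [← sum_range_add_sum_Ico a htN.le, ← sum_range_add_sum_Ico b htN.le, mul_add, add_mul]
  exact add_le_add_left cross _

theorem ENNReal.one_sub_natCast_div {a b : ℕ} (hab : a + b ≠ 0) :
    1 - (a : ℝ≥0∞) / (a + b : ℕ) = b / (a + b : ℕ) := by
  have hn : ((a + b : ℕ) : ℝ≥0∞) ≠ 0 := Nat.cast_ne_zero.mpr hab
  refine (ENNReal.eq_sub_of_add_eq (ENNReal.div_lt_top (by simp) hn).ne ?_).symm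
  rw [ENNReal.div_add_div_same, ← Nat.cast_add, add_comm, ENNReal.div_self hn (by simp)]

theorem PMF.binomial_apply_eq_binomialWeight_div {p : ℝ≥0} (h : p ≤ 1) {a b : ℕ}
    (hp : (p : ℝ≥0∞) = a / (a + b : ℕ)) (hab : a + b ≠ 0) (i : ℕ) (k : Fin (i + 1)) :
    PMF.binomial p h i k = binomialWeight i a b k / ((a + b) ^ i : ℕ) := by
  have hk : (k : ℕ) + (i - k) = i := Nat.add_sub_cancel' k.is_le
  rw [PMF.binomial_apply, hp, ENNReal.one_sub_natCast_div hab, Fin.val_last]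
  calc ((a : ℝ≥0∞) / (a + b : ℕ)) ^ (k : ℕ) * ((b : ℝ≥0∞) / (a + b : ℕ)) ^ (i - k) *
        (i.choose k : ℕ)
      = binomialWeight i a b k * ((a + b : ℕ) : ℝ≥0∞)⁻¹ ^ ((k : ℕ) + (i - k)) := by
        simp only [div_eq_mul_inv, binomialWeight]; push_cast; ring
    _ = _ := by rw [hk, ← ENNReal.inv_pow, ← div_eq_mul_inv, Nat.cast_pow]

theorem PMF.sum_binomial_tail_eq {p : ℝ≥0} (h : p ≤ 1) {a b : ℕ}
    (hp : (p : ℝ≥0∞) = a / (a + b : ℕ)) (hab : a + b ≠ 0) (i t : ℕ) :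
    ∑ k : Fin (i + 1), (if t ≤ (k : ℕ) then PMF.binomial p h i k else 0) =
      ((∑ k ∈ Ico t (i + 1), binomialWeight i a b k : ℕ) : ℝ≥0∞) /
        ((a + b) ^ i : ℕ) := by
  have hfilter : {k ∈ range (i + 1) | t ≤ k} = Ico t (i + 1) := by ext; simp [and_comm]
  simp only [PMF.binomial_apply_eq_binomialWeight_div h hp hab, div_eq_mul_inv]
  rw [Fin.sum_univ_eq_sum_range (fun k => if t ≤ k then
      (binomialWeight i a b k : ℝ≥0∞) * (((a + b) ^ i : ℕ) : ℝ≥0∞)⁻¹ else 0),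
    ← sum_filter, hfilter, Nat.cast_sum, sum_mul]

theorem PMF.one_le_sum_binomial_tail {p : ℝ≥0} (h : p ≤ 1) (hp : p = 1) {i t : ℕ}
    (ht : t ≤ i) :
    1 ≤ ∑ k : Fin (i + 1), if t ≤ (k : ℕ) then PMF.binomial p h i k else 0 := by
  refine le_trans ?_ (single_le_sum (fun _ _ => bot_le) (mem_univ (Fin.last i)))
  simp [ht, PMF.binomial_apply_last, hp]

theorem ENNReal.natCast_div_le_natCast_div {x y z w : ℕ} (hw : w ≠ 0)
    (h : x * w ≤ y * z) : (x : ℝ≥0∞) / y ≤ z / w := by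
  rcases eq_or_ne y 0 with rfl | hy
  · simp_all
  rw [← ENNReal.mul_div_mul_right x y (by simpa) (ENNReal.natCast_ne_top w),
    ← ENNReal.mul_div_mul_left z w (by simpa : (y : ℝ≥0∞) ≠ 0) (ENNReal.natCast_ne_top y)]
  exact ENNReal.div_le_div_right (by exact_mod_cast h) _

theorem ENNReal.toNNReal_min_natCast_div_one_eq_one {j n : ℕ} (hn : n ≠ 0) (hnj : n ≤ j) :
    (min ((j : ℝ≥0∞) / n) 1).toNNReal = 1 := by
  rw [min_eq_right, ENNReal.toNNReal_one]
  rw [ENNReal.le_div_iff_mul_le (Or.inl (by simpa)) (Or.inl (by simp)), one_mul]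
  exact_mod_cast hnj

theorem ENNReal.coe_toNNReal_min_natCast_div_one {j q n : ℕ} (hjq : j + q = n) :
    ((min ((j : ℝ≥0∞) / n) 1).toNNReal : ℝ≥0∞) = j / (j + q : ℕ) := by
  rw [ENNReal.coe_toNNReal (by simp), hjq, min_eq_left]
  exact ENNReal.div_le_of_le_mul (by rw [one_mul]; exact_mod_cast (by omega : j ≤ n))

/-- **Stochastic domination of the intersection of a fixed and a uniform random subset
by a binomial law.**  `I` is a fixed subset of `{1,…,m}` of size `i`, `J` a uniformly
random subset of size `j`; then `|I ∩ J|` is stochastically dominated by a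
`Bin(i, min(j/(m-i), 1))` random variable (the convention `Bin(n,p) = δ_n` for `p > 1`
corresponds to truncating the parameter at `1`). -/
theorem stmt0 (m i j : ℕ) (hi : i < m)
    (I : Finset (Fin m)) (hI : I.card = i) :
    ∀ t : ℕ,
      (((Finset.univ.powersetCard j).filter
          (fun J : Finset (Fin m) => t ≤ (I ∩ J).card)).card : ℝ≥0∞) /
        ((Finset.univ.powersetCard j : Finset (Finset (Fin m))).card : ℝ≥0∞)
      ≤ ∑ k : Fin (i + 1), (if t ≤ (k : ℕ) then
          PMF.binomial (min ((j : ℝ≥0∞) / ((m - i : ℕ) : ℝ≥0∞)) 1).toNNReal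
            (by simpa using ENNReal.toNNReal_mono ENNReal.one_ne_top (min_le_right _ _)) i k
        else 0) := by
  intro t
  have hIc : #Iᶜ = m - i := by rw [card_compl, Fintype.card_fin, hI]
  rw [card_filter_le_card_inter_eq_sum, card_powersetCard_eq_sum_hypergeomWeight I, hIc, hI]
  rcases le_or_gt (m - i) j with hnj | hjn
  · have hp := ENNReal.toNNReal_min_natCast_div_one_eq_one (by omega) hnj
    rcases le_or_gt t i with hti | hit
    · refine le_trans (ENNReal.div_le_of_le_mul ?_) (PMF.one_le_sum_binomial_tail _ hp hti)
      rw [one_mul]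
      exact_mod_cast sum_le_sum_of_subset fun k hk => mem_range.2 (mem_Ico.1 hk).2
    · simp [Ico_eq_empty_of_le (by omega : i + 1 ≤ t)]
  · obtain ⟨q, hq⟩ : ∃ q, m - i = j + q := ⟨m - i - j, by omega⟩
    rw [PMF.sum_binomial_tail_eq _ (ENNReal.coe_toNNReal_min_natCast_div_one hq.symm) (by omega),
      hq]
    refine ENNReal.natCast_div_le_natCast_div (pow_ne_zero _ (by omega)) ?_
    rw [← sum_binomialWeight i j q]
    exact sum_Ico_mul_sum_range_le_of_ratio_antitone
      (fun k l hkl _ => hypergeomWeight_mul_binomialWeight_le rfl hkl) t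
end

section
/- Let $\mathcal{P}_- \subseteq \mathcal{P}_+$ be two finite sets of points in the plane with pairwise distinct $x$-coordinates and pairwise distinct $y$-coordinates. Then for any chain $C$ of the binary search tree $\mathrm{BST}(\mathcal{P}_+)$, the set $C \cap \mathcal{P}_-$ is a chain of $\mathrm{BST}(\mathcal{P}_-)$. -/
/-- Binary trees with real labels. -/
inductive BTree where
  | leaf : BTree
  | node : BTree → ℝ → BTree → BTree

namespace BTree

/-- Insertion of a value into a binary search tree. -/
noncomputable def insert (x : ℝ) : BTree → BTree
  | leaf => node leaf x leaf
  | node l y r => if x < y then node (insert x l) y r else node l y (insert x r)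

/-- Number of nodes. -/
def size : BTree → ℕ
  | leaf => 0
  | node l _ r => size l + 1 + size r

/-- Number of nodes on a longest root-to-leaf path. -/
def depth : BTree → ℕ
  | leaf => 0
  | node l _ r => 1 + max (depth l) (depth r)

/-- Height: maximal number of edges from the root to a leaf (`-1` for the empty tree). -/
def height (t : BTree) : ℤ := (depth t : ℤ) - 1

/-- The value `x` is a label of the tree. -/
def Mem (x : ℝ) : BTree → Prop
  | leaf => False
  | node l y r => x = y ∨ Mem x l ∨ Mem x r

/-- The node labeled `a` is a (strict) ancestor of the node labeled `b`. -/
def IsAncestor (a b : ℝ) : BTree → Prop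
  | leaf => False
  | node l y r => (a = y ∧ (Mem b l ∨ Mem b r)) ∨ IsAncestor a b l ∨ IsAncestor a b r

/-- A set of labels is a chain if any two of its nodes are comparable for the
ancestor relation. -/
def IsChain (t : BTree) (C : Set ℝ) : Prop :=
  ∀ a ∈ C, ∀ b ∈ C, a = b ∨ IsAncestor a b t ∨ IsAncestor b a t

end BTree

/-- The binary search tree obtained by inserting the elements of a list in order. -/
noncomputable def bstOfList (l : List ℝ) : BTree := l.foldl (fun t x => t.insert x) .leaf

/-- The BST of a list of planar points, already sorted by increasing `x`-coordinate:
insert the `y`-coordinates in order. -/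
noncomputable def bstOfSortedPts (l : List (ℝ × ℝ)) : BTree := bstOfList (l.map Prod.snd)

open scoped Classical in
/-- The BST of a finite set of planar points, given as a list: sort the points by
increasing `x`-coordinate and insert the `y`-coordinates in this order. -/
noncomputable def bstOfPts (l : List (ℝ × ℝ)) : BTree :=
  bstOfSortedPts (l.mergeSort (fun p q => decide (p.1 ≤ q.1)))

open scoped Classical in
/-- Length of a longest increasing subsequence of `f`. -/
noncomputable def lisLen {n : ℕ} {β : Type*} [Preorder β] (f : Fin n → β) : ℕ :=
  Finset.univ.sup fun s : Finset (Fin n) => if StrictMonoOn f ↑s then s.card else 0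

open scoped Classical in
/-- Length of a longest decreasing subsequence of `f`. -/
noncomputable def ldsLen {n : ℕ} {β : Type*} [Preorder β] (f : Fin n → β) : ℕ :=
  Finset.univ.sup fun s : Finset (Fin n) => if StrictAntiOn f ↑s then s.card else 0

/-!
Two distinct keys `a`, `b` of the binary search tree built from a list are comparable for the
ancestor relation exactly when no key strictly between them is inserted before both of them:
the first key of the closed interval between `a` and `b` to be inserted is their lowest common
ancestor. This criterion only involves the relative order of the keys in the insertion list, so
it passes to sublists, and the `x`-sorted list of `P₋` is a sublist of that of `P₊`.
-/

open Set

section Unseparated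

variable {α : Type*} [LinearOrder α]

/-- No element of the list strictly between `a` and `b` comes before the first occurrence of
`a` or of `b`. -/
def List.Unseparated (a b : α) : List α → Prop
  | [] => True
  | c :: l => c = a ∨ c = b ∨ (c ∉ uIoo a b ∧ List.Unseparated a b l)

namespace List

theorem unseparated_filter_iff {a b : α} (p : α → Bool) (hp : ∀ c, p c = false → c ∉ uIcc a b) :
    ∀ l : List α, (l.filter p).Unseparated a b ↔ l.Unseparated a b
  | [] => Iff.rfl
  | c :: l => by
    have ih := unseparated_filter_iff p hp l
    cases hc : p c
    · have hca : c ≠ a := fun h => hp c hc (h ▸ left_mem_uIcc)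
      have hcb : c ≠ b := fun h => hp c hc (h ▸ right_mem_uIcc)
      have hcab : c ∉ uIoo a b := fun h => hp c hc (uIoo_subset_uIcc_self h)
      simp [filter_cons_of_neg, hc, Unseparated, hca, hcb, hcab, ih]
    · simp [filter_cons_of_pos, hc, Unseparated, ih]

theorem unseparated_cons_iff {a b y : α} {l : List α} (hay : a ≠ y) (hby : b ≠ y) :
    (y :: l).Unseparated a b ↔
      (a < y ∧ b < y ∧ (l.filter (· < y)).Unseparated a b) ∨
        (y < a ∧ y < b ∧ (l.filter fun x => ¬ x < y).Unseparated a b) := by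
  simp only [Unseparated, hay.symm, hby.symm, false_or]
  rcases hay.lt_or_gt with ha | ha <;> rcases hby.lt_or_gt with hb | hb
  · have hy : y ∉ uIoo a b := fun h => h.2.not_gt (sup_lt_iff.mpr ⟨ha, hb⟩)
    rw [unseparated_filter_iff (· < y) fun c hc hmem => ?_]
    · simp [ha, hb, ha.not_gt, hy]
    · simp only [decide_eq_false_iff_not, not_lt] at hc
      exact hmem.2.not_gt ((sup_lt_iff.mpr ⟨ha, hb⟩).trans_le hc)
  · simp [mem_uIoo_of_lt ha hb, ha.not_gt, hb.not_gt]
  · simp [mem_uIoo_of_gt hb ha, ha.not_gt, hb.not_gt]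
  · have hy : y ∉ uIoo a b := fun h => h.1.not_gt (lt_inf_iff.mpr ⟨ha, hb⟩)
    rw [unseparated_filter_iff (fun x => ¬ x < y) fun c hc hmem => ?_]
    · simp [ha, hb, ha.not_gt, hy]
    · have hc : c < y := by simpa using hc
      exact hmem.1.not_gt (hc.trans (lt_inf_iff.mpr ⟨ha, hb⟩))

theorem Unseparated.sublist {a b : α} {l₁ l₂ : List α} (h : l₁ <+ l₂) (hnd : l₂.Nodup)
    (ha : a ∈ l₁) (hb : b ∈ l₁) (hsep : l₂.Unseparated a b) : l₁.Unseparated a b := by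
  induction h with
  | slnil => trivial
  | @cons l₁ l₂ c h ih =>
    obtain ⟨hc, hnd⟩ := nodup_cons.mp hnd
    rcases hsep with rfl | rfl | ⟨-, hsep⟩
    · exact absurd (h.subset ha) hc
    · exact absurd (h.subset hb) hc
    · exact ih hnd ha hb hsep
  | @cons_cons l₁ l₂ c h ih =>
    by_cases hca : c = a
    · exact Or.inl hca
    by_cases hcb : c = b
    · exact Or.inr (Or.inl hcb)
    rcases hsep with h' | h' | ⟨hc, hsep⟩
    · exact absurd h' hca
    · exact absurd h' hcb
    have ha' : a ∈ l₁ := (mem_cons.mp ha).resolve_left (Ne.symm hca)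
    have hb' : b ∈ l₁ := (mem_cons.mp hb).resolve_left (Ne.symm hcb)
    exact Or.inr (Or.inr ⟨hc, ih (nodup_cons.mp hnd).2 ha' hb' hsep⟩)

end List

end Unseparated

namespace BTree

variable {a b y : ℝ} {l r : BTree}

theorem mem_insert {x z : ℝ} : ∀ {t : BTree}, Mem x (t.insert z) ↔ x = z ∨ Mem x t
  | leaf => by simp [insert, Mem]
  | node l y r => by
    unfold insert
    split_ifs <;> simp only [Mem, mem_insert] <;> tauto

theorem IsAncestor.mem : ∀ {t : BTree}, IsAncestor a b t → Mem a t ∧ Mem b t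
  | leaf, h => h.elim
  | node l y r, h => by
    rcases h with ⟨rfl, hb⟩ | h | h
    · exact ⟨Or.inl rfl, Or.inr hb⟩
    · exact ⟨Or.inr (Or.inl h.mem.1), Or.inr (Or.inl h.mem.2)⟩
    · exact ⟨Or.inr (Or.inr h.mem.1), Or.inr (Or.inr h.mem.2)⟩

def Comparable (a b : ℝ) (t : BTree) : Prop := IsAncestor a b t ∨ IsAncestor b a t

theorem Comparable.mem {t : BTree} (h : Comparable a b t) : Mem a t ∧ Mem b t :=
  h.elim IsAncestor.mem fun h => h.mem.symm

theorem Comparable.symm {t : BTree} (h : Comparable a b t) : Comparable b a t := Or.symm h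

theorem comparable_node_root (hb : Mem b l ∨ Mem b r) : Comparable y b (node l y r) :=
  Or.inl (Or.inl ⟨rfl, hb⟩)

theorem comparable_node_iff (ha : a ≠ y) (hb : b ≠ y) :
    Comparable a b (node l y r) ↔ Comparable a b l ∨ Comparable a b r := by
  simp only [Comparable, IsAncestor, ha, hb, false_and, false_or]
  tauto

end BTree

open BTree

theorem foldl_insert_node (y : ℝ) :
    ∀ (xs : List ℝ) (l r : BTree), xs.foldl (fun t x => t.insert x) (node l y r) =
      node ((xs.filter (· < y)).foldl (fun t x => t.insert x) l) y
        ((xs.filter (fun x => ¬ x < y)).foldl (fun t x => t.insert x) r)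
  | [], _, _ => rfl
  | x :: xs, l, r => by
    by_cases h : x < y
    · simp [BTree.insert, h, foldl_insert_node y xs]
    · simp [BTree.insert, h, not_lt.mp h, foldl_insert_node y xs]

theorem bstOfList_cons (y : ℝ) (xs : List ℝ) :
    bstOfList (y :: xs) =
      node (bstOfList (xs.filter (· < y))) y (bstOfList (xs.filter (fun x => ¬ x < y))) :=
  foldl_insert_node y xs leaf leaf

theorem mem_foldl_insert {x : ℝ} :
    ∀ (xs : List ℝ) (t : BTree), Mem x (xs.foldl (fun t x => t.insert x) t) ↔ x ∈ xs ∨ Mem x t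
  | [], _ => by simp
  | z :: xs, t => by
    simp only [List.foldl_cons, mem_foldl_insert xs, BTree.mem_insert, List.mem_cons]
    tauto

theorem mem_bstOfList {x : ℝ} {xs : List ℝ} : Mem x (bstOfList xs) ↔ x ∈ xs := by
  simp [bstOfList, mem_foldl_insert, Mem]

theorem comparable_bstOfList_cons_self {y b : ℝ} {xs : List ℝ} (hb : b ∈ xs) :
    Comparable y b (bstOfList (y :: xs)) := by
  rw [bstOfList_cons]
  refine comparable_node_root ?_
  simp only [mem_bstOfList, List.mem_filter, decide_eq_true_eq]
  tauto

theorem comparable_bstOfList_cons_iff {a b y : ℝ} {xs : List ℝ} (hay : a ≠ y) (hby : b ≠ y) :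
    Comparable a b (bstOfList (y :: xs)) ↔
      (a < y ∧ b < y ∧ Comparable a b (bstOfList (xs.filter (· < y)))) ∨
        (y < a ∧ y < b ∧ Comparable a b (bstOfList (xs.filter fun x => ¬ x < y))) := by
  rw [bstOfList_cons, comparable_node_iff hay hby]
  refine or_congr ⟨fun h => ?_, fun h => h.2.2⟩ ⟨fun h => ?_, fun h => h.2.2⟩
  · have := h.mem
    simp only [mem_bstOfList, List.mem_filter, decide_eq_true_eq] at this
    exact ⟨this.1.2, this.2.2, h⟩
  · have := h.mem
    simp only [mem_bstOfList, List.mem_filter, decide_eq_true_eq, not_lt] at this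
    exact ⟨this.1.2.lt_of_ne' hay, this.2.2.lt_of_ne' hby, h⟩

theorem comparable_bstOfList_iff : ∀ (l : List ℝ) {a b : ℝ}, a ∈ l → b ∈ l → a ≠ b →
    (Comparable a b (bstOfList l) ↔ l.Unseparated a b)
  | [], _, _, ha, _, _ => absurd ha List.not_mem_nil
  | y :: xs, a, b, ha, hb, hab => by
    by_cases hay : a = y
    · subst hay
      exact iff_of_true (comparable_bstOfList_cons_self ((List.mem_cons.mp hb).resolve_left
        (Ne.symm hab))) (Or.inl rfl)
    by_cases hby : b = y
    · subst hby
      exact iff_of_true (comparable_bstOfList_cons_self ((List.mem_cons.mp ha).resolve_left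
        hab)).symm (Or.inr (Or.inl rfl))
    have ha' : a ∈ xs := (List.mem_cons.mp ha).resolve_left hay
    have hb' : b ∈ xs := (List.mem_cons.mp hb).resolve_left hby
    rw [comparable_bstOfList_cons_iff hay hby, List.unseparated_cons_iff hay hby]
    refine or_congr (and_congr_right fun hay => and_congr_right fun hby => ?_)
      (and_congr_right fun hay => and_congr_right fun hby => ?_)
    · exact comparable_bstOfList_iff _ (by simpa using ⟨ha', hay⟩) (by simpa using ⟨hb', hby⟩) hab
    · exact comparable_bstOfList_iff _ (by simpa using ⟨ha', hay.le⟩)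
        (by simpa using ⟨hb', hby.le⟩) hab
  termination_by l => l.length
  decreasing_by all_goals exact Nat.lt_succ_of_le (List.length_filter_le _ _)

theorem stmt5_general (Pp Pm : List (ℝ × ℝ)) (hsub : Pm.Sublist Pp)
    (hyd : Pp.Pairwise (fun p q => p.2 ≠ q.2))
    (C : Set (ℝ × ℝ)) (hC : C ⊆ {p | p ∈ Pp})
    (hchain : BTree.IsChain (bstOfSortedPts Pp) (Prod.snd '' C)) :
    BTree.IsChain (bstOfSortedPts Pm) (Prod.snd '' (C ∩ {p | p ∈ Pm})) := by
  rintro _ ⟨p, ⟨hpC, hpm⟩, rfl⟩ _ ⟨q, ⟨hqC, hqm⟩, rfl⟩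
  refine or_iff_not_imp_left.mpr fun hpq => ?_
  have hcomp : Comparable p.2 q.2 (bstOfSortedPts Pp) :=
    (hchain p.2 ⟨p, hpC, rfl⟩ q.2 ⟨q, hqC, rfl⟩).resolve_left hpq
  have hpm' := List.mem_map_of_mem (f := Prod.snd) hpm
  have hqm' := List.mem_map_of_mem (f := Prod.snd) hqm
  rw [bstOfSortedPts, comparable_bstOfList_iff _ (List.mem_map_of_mem (hC hpC))
    (List.mem_map_of_mem (hC hqC)) hpq] at hcomp
  rw [bstOfSortedPts, ← Comparable, comparable_bstOfList_iff _ hpm' hqm' hpq]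
  exact hcomp.sublist (hsub.map _) (List.pairwise_map.mpr hyd) hpm' hqm'

/-- **Restriction of chains of binary search trees of point sets.** If `P₋ ⊆ P₊` are point
sets with distinct `x`- and distinct `y`-coordinates (given as lists sorted by increasing
`x`-coordinate), then for any chain `C` of `BST(P₊)`, the set `C ∩ P₋` is a chain of
`BST(P₋)`. -/
theorem stmt5 (Pp Pm : List (ℝ × ℝ)) (hsub : Pm.Sublist Pp)
    (hxs : Pp.Pairwise (fun p q => p.1 < q.1))
    (hyd : Pp.Pairwise (fun p q => p.2 ≠ q.2))
    (C : Set (ℝ × ℝ)) (hC : C ⊆ {p | p ∈ Pp})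
    (hchain : BTree.IsChain (bstOfSortedPts Pp) (Prod.snd '' C)) :
    BTree.IsChain (bstOfSortedPts Pm) (Prod.snd '' (C ∩ {p | p ∈ Pm})) :=
  stmt5_general Pp Pm hsub hyd C hC hchain
end
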